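/- Let G⁻⁻, G⁻⁺, G⁺⁻, G⁺⁺ be the block entries of the inverse (E·1 - V)⁻¹ of a self-adjoint operator restricted appropriately, i.e. suppose G^{x,y} = π^x (E·1 - V)⁻¹ (π^y)* for surjective partial isometries π⁻, π⁺ with orthogonal ranges, with E real and E·1 - V invertible, and suppose G⁻⁺ is invertible. Then the block operator A = ((G⁻⁺)⁻¹, -(G⁻⁺)⁻¹ G⁻⁻; G⁺⁺(G⁻⁺)⁻¹, G⁺⁻ - G⁺⁺(G⁻⁺)⁻¹ G⁻⁻) satisfies A* I A = I with I = (0, -1; 1, 0). -/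
import Mathlib


open ContinuousLinearMap

variable {Hh : Type*}

/-- The block operator `(A B; C D)` on the Hilbert space `Ĥ ⊕₂ Ĥ`. -/
noncomputable def blockOp [NormedAddCommGroup Hh] [InnerProductSpace ℂ Hh]
    (A B C D : Hh →L[ℂ] Hh) : WithLp 2 (Hh × Hh) →L[ℂ] WithLp 2 (Hh × Hh) :=
  ((WithLp.prodContinuousLinearEquiv 2 ℂ Hh Hh).symm : (Hh × Hh) →L[ℂ] WithLp 2 (Hh × Hh)) ∘L
    (((A ∘L fst ℂ Hh Hh + B ∘L snd ℂ Hh Hh).prod (C ∘L fst ℂ Hh Hh + D ∘L snd ℂ Hh Hh)) ∘L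
      ((WithLp.prodContinuousLinearEquiv 2 ℂ Hh Hh) : WithLp 2 (Hh × Hh) →L[ℂ] (Hh × Hh)))

lemma blockOp_comp [NormedAddCommGroup Hh] [InnerProductSpace ℂ Hh]
    (A B C D A' B' C' D' : Hh →L[ℂ] Hh) :
    blockOp A B C D ∘L blockOp A' B' C' D' =
    blockOp (A ∘L A' + B ∘L C') (A ∘L B' + B ∘L D') (C ∘L A' + D ∘L C') (C ∘L B' + D ∘L D') := by
  ext x <;> simp [blockOp] <;> abel_nf <;> simp

lemma blockOp_adjoint [NormedAddCommGroup Hh] [InnerProductSpace ℂ Hh] [CompleteSpace Hh]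
    (A B C D : Hh →L[ℂ] Hh) :
    ContinuousLinearMap.adjoint (blockOp A B C D)
      = blockOp (adjoint A) (adjoint C) (adjoint B) (adjoint D) := by
  symm
  rw [eq_adjoint_iff]
  intro x y
  simp [blockOp, WithLp.prod_inner_apply, inner_add_left, inner_add_right, adjoint_inner_left]
  ring

/-- let `V` be bounded self-adjoint on `H`, `E ∈ ℝ` with `E·1 - V` invertible
(with two-sided inverse `R`), and let `π⁻, π⁺ : H → Ĥ` be surjective partial isometries with
mutually orthogonal ranges of their adjoints.  Put `G^{x,y} = π^x (E·1 - V)⁻¹ (π^y)*` and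
suppose `G⁻⁺` is invertible (with two-sided inverse `K`).  Then the block operator
`𝒜 = ((G⁻⁺)⁻¹, -(G⁻⁺)⁻¹G⁻⁻; G⁺⁺(G⁻⁺)⁻¹, G⁺⁻ - G⁺⁺(G⁻⁺)⁻¹G⁻⁻)` satisfies `𝒜* ℐ 𝒜 = ℐ`. -/
theorem reduced_A_I_unitary
    {H : Type*} [NormedAddCommGroup H] [InnerProductSpace ℂ H] [CompleteSpace H]
    [NormedAddCommGroup Hh] [InnerProductSpace ℂ Hh] [CompleteSpace Hh]
    (V R : H →L[ℂ] H) (hV : IsSelfAdjoint V) (E : ℝ)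
    (hR : ((E : ℂ) • (1 : H →L[ℂ] H) - V) ∘L R = 1)
    (hR' : R ∘L ((E : ℂ) • (1 : H →L[ℂ] H) - V) = 1)
    (πm πp : H →L[ℂ] Hh)
    (hπm : πm ∘L ContinuousLinearMap.adjoint πm = 1)
    (hπp : πp ∘L ContinuousLinearMap.adjoint πp = 1)
    (horth : πm ∘L ContinuousLinearMap.adjoint πp = 0)
    (horth' : πp ∘L ContinuousLinearMap.adjoint πm = 0)
    (Gmm Gmp Gpm Gpp K : Hh →L[ℂ] Hh)
    (hGmm : Gmm = πm ∘L (R ∘L ContinuousLinearMap.adjoint πm))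
    (hGmp : Gmp = πm ∘L (R ∘L ContinuousLinearMap.adjoint πp))
    (hGpm : Gpm = πp ∘L (R ∘L ContinuousLinearMap.adjoint πm))
    (hGpp : Gpp = πp ∘L (R ∘L ContinuousLinearMap.adjoint πp))
    (hK : Gmp ∘L K = 1) (hK' : K ∘L Gmp = 1) :
    ContinuousLinearMap.adjoint
        (blockOp K (-(K ∘L Gmm)) (Gpp ∘L K) (Gpm - Gpp ∘L (K ∘L Gmm)))
      ∘L (blockOp (0 : Hh →L[ℂ] Hh) (-1) 1 0
        ∘L blockOp K (-(K ∘L Gmm)) (Gpp ∘L K) (Gpm - Gpp ∘L (K ∘L Gmm)))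
    = blockOp (0 : Hh →L[ℂ] Hh) (-1) 1 0 := by
  -- `R` is self-adjoint
  have hRS : star R = R := by
    have hTS : star ((E : ℂ) • (1 : H →L[ℂ] H) - V) = (E : ℂ) • (1 : H →L[ℂ] H) - V := by
      simp [star_sub, star_smul, hV.star_eq, Complex.conj_ofReal]
    have hRm : ((E : ℂ) • (1 : H →L[ℂ] H) - V) * R = 1 := hR
    have h1 : star R * ((E : ℂ) • (1 : H →L[ℂ] H) - V) = 1 := by
      calc star R * ((E : ℂ) • (1 : H →L[ℂ] H) - V)
          = star (star ((E : ℂ) • (1 : H →L[ℂ] H) - V) * R) := by rw [star_mul, star_star]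
        _ = 1 := by rw [hTS, hRm, star_one]
    calc star R = star R * (((E : ℂ) • (1 : H →L[ℂ] H) - V) * R) := by rw [hRm, mul_one]
      _ = (star R * ((E : ℂ) • (1 : H →L[ℂ] H) - V)) * R := by rw [mul_assoc]
      _ = R := by rw [h1, one_mul]
  have hRA : ContinuousLinearMap.adjoint R = R := by rw [← star_eq_adjoint]; exact hRS
  -- star facts for the Green's-function blocks
  have hGmmS : star Gmm = Gmm := by
    rw [star_eq_adjoint, hGmm]; simp [adjoint_comp, hRA, comp_assoc]
  have hGppS : star Gpp = Gpp := by
    rw [star_eq_adjoint, hGpp]; simp [adjoint_comp, hRA, comp_assoc]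
  have hGpmS : star Gpm = Gmp := by
    rw [star_eq_adjoint, hGpm, hGmp]; simp [adjoint_comp, hRA, comp_assoc]
  have hGmpS : star Gmp = Gpm := by
    rw [star_eq_adjoint, hGmp, hGpm]; simp [adjoint_comp, hRA, comp_assoc]
  have hKm : Gmp * K = 1 := hK
  have hKS : star K * Gpm = 1 := by
    calc star K * Gpm = star (Gmp * K) := by rw [star_mul, hGmpS]
      _ = 1 := by rw [hKm, star_one]
  have hK2 : ∀ x : Hh →L[ℂ] Hh, Gmp * (K * x) = x := by
    intro x; rw [← mul_assoc, hKm, one_mul]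
  have hKS2 : ∀ x : Hh →L[ℂ] Hh, star K * (Gpm * x) = x := by
    intro x; rw [← mul_assoc, hKS, one_mul]
  rw [blockOp_adjoint, blockOp_comp, blockOp_comp]
  congr 1
  · simp only [← mul_def, ← star_eq_adjoint, star_mul, hGppS]
    noncomm_ring
  · simp only [← mul_def, ← star_eq_adjoint, star_mul, hGppS]
    noncomm_ring
    simp [← mul_assoc, hKS]
  · simp only [← mul_def, ← star_eq_adjoint, star_mul, star_sub, star_neg, hGppS, hGmmS, hGpmS]
    noncomm_ring
    simp [mul_assoc, hKS, hK2, mul_def Gmp K, hK]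
  · simp only [← mul_def, ← star_eq_adjoint, star_mul, star_sub, star_neg, hGppS, hGmmS, hGpmS]
    noncomm_ring
    simp [mul_assoc, hKS, hK2, hKS2]
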